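/- arXiv:1402.6095 — 3 statements merged into one kernel-verified Lean document; each statement's English description precedes it below -/
import Mathlib

section
/- Let μ be a Borel probability measure on ℂ with compact support, and define its Newton potential M(ξ) = ∫ 1/|w − ξ| dμ(w). Then for every ζ ∈ ℂ, the limit as r → 0 of (1/(πr²)) ∫_{D(ζ,r)} |w − ζ|·M(w) dL(w) equals μ({ζ}), where L is Lebesgue measure on ℂ and D(ζ,r) is the open disc of center ζ and radius r. -/
/-!
Swapping the order of integration, the quantity equals `∫ A_r(ξ) dμ(ξ)`, where `A_r(ξ)` is the
average over `D(ζ, r)` of `|w - ζ| / |w - ξ|`. Now `A_r(ζ) = 1`, `A_r(ξ) ≤ 2r / |ξ - ζ| → 0` for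
`ξ ≠ ζ`, and `A_r ≤ 3` uniformly because `∫_{D(c,r)} dL(w) / |w - ξ| ≤ 3πr` for every `c` and `ξ`
(polar coordinates give exactly `2πr` when `c = ξ`). Dominated convergence concludes.
-/

open MeasureTheory Filter Metric
open scoped ENNReal Real Topology

lemma Complex.volume_ball_eq_ofReal (c : ℂ) {r : ℝ} (hr : 0 ≤ r) :
    volume (ball c r) = ENNReal.ofReal (π * r ^ 2) := by
  rw [Complex.volume_ball, ENNReal.ofReal_mul Real.pi_pos.le, ← ENNReal.ofReal_pow hr,
    ← NNReal.coe_real_pi, ENNReal.ofReal_coe_nnreal, mul_comm]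

lemma Complex.setLIntegral_ball_zero_inv_norm {r : ℝ} (hr : 0 ≤ r) :
    ∫⁻ w in ball (0 : ℂ) r, ENNReal.ofReal ‖w‖⁻¹ = ENNReal.ofReal (2 * π * r) := by
  rw [← lintegral_indicator measurableSet_ball, ← Complex.lintegral_comp_polarCoord_symm,
    polarCoord_target]
  have hpolar : ∀ p ∈ Set.Ioi (0 : ℝ) ×ˢ Set.Ioo (-π) π,
      ENNReal.ofReal p.1 • (ball (0 : ℂ) r).indicator (fun w => ENNReal.ofReal ‖w‖⁻¹)
        (Complex.polarCoord.symm p) = (Set.Iio r ×ˢ Set.univ).indicator 1 p := by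
    rintro ⟨ρ, θ⟩ ⟨hρ, -⟩
    have hρ : 0 < ρ := hρ
    by_cases hρr : ρ < r
    · simp [Set.indicator_of_mem, abs_of_pos hρ, hρr, ← ENNReal.ofReal_mul hρ.le, hρ.ne']
    · simp [Set.indicator_of_notMem, abs_of_pos hρ, hρr]
  have hrect : Set.Iio r ×ˢ Set.univ ∩ Set.Ioi 0 ×ˢ Set.Ioo (-π) π
      = Set.Ioo 0 r ×ˢ Set.Ioo (-π) π := by
    ext ⟨ρ, θ⟩
    simp only [Set.mem_inter_iff, Set.mem_prod, Set.mem_Iio, Set.mem_Ioi, Set.mem_Ioo,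
      Set.mem_univ]
    tauto
  rw [setLIntegral_congr_fun (measurableSet_Ioi.prod measurableSet_Ioo) hpolar,
    lintegral_indicator_one (measurableSet_Iio.prod .univ), Measure.restrict_apply
    (measurableSet_Iio.prod .univ), hrect, Measure.volume_eq_prod, Measure.prod_prod,
    Real.volume_Ioo, Real.volume_Ioo, ← ENNReal.ofReal_mul (by simpa using hr)]
  ring_nf

lemma Complex.setLIntegral_ball_inv_norm_sub (ξ : ℂ) {r : ℝ} (hr : 0 ≤ r) :
    ∫⁻ w in ball ξ r, ENNReal.ofReal ‖w - ξ‖⁻¹ = ENNReal.ofReal (2 * π * r) := by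
  have hpre : (fun w => w - ξ) ⁻¹' ball 0 r = ball ξ r := by
    ext w; simp [dist_eq_norm]
  rw [← Complex.setLIntegral_ball_zero_inv_norm hr, ← hpre,
    (measurePreserving_sub_right volume ξ).setLIntegral_comp_preimage_emb
      (MeasurableEquiv.subRight ξ).measurableEmbedding (fun w => ENNReal.ofReal ‖w‖⁻¹)]

/-- Off `ball ξ r` the integrand is at most `r⁻¹`, which accounts for the extra `π r`. -/
lemma Complex.setLIntegral_ball_inv_norm_sub_le (c ξ : ℂ) {r : ℝ} (hr : 0 < r) :
    ∫⁻ w in ball c r, ENNReal.ofReal ‖w - ξ‖⁻¹ ≤ ENNReal.ofReal (3 * π * r) := by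
  have hsplit : ∀ w, ENNReal.ofReal ‖w - ξ‖⁻¹
      ≤ (ball ξ r).indicator (fun w => ENNReal.ofReal ‖w - ξ‖⁻¹) w + ENNReal.ofReal r⁻¹ := by
    intro w
    by_cases hw : w ∈ ball ξ r
    · simp [Set.indicator_of_mem hw]
    · rw [Set.indicator_of_notMem hw, zero_add]
      rw [mem_ball, dist_eq_norm, not_lt] at hw
      exact ENNReal.ofReal_le_ofReal (inv_anti₀ hr hw)
  calc ∫⁻ w in ball c r, ENNReal.ofReal ‖w - ξ‖⁻¹
      ≤ ∫⁻ w in ball c r, (ball ξ r).indicator (fun w => ENNReal.ofReal ‖w - ξ‖⁻¹) w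
          + ENNReal.ofReal r⁻¹ := lintegral_mono hsplit
    _ ≤ (∫⁻ w, (ball ξ r).indicator (fun w => ENNReal.ofReal ‖w - ξ‖⁻¹) w)
          + ENNReal.ofReal r⁻¹ * volume (ball c r) := by
      rw [lintegral_add_right _ measurable_const, setLIntegral_const]
      gcongr
      exact Measure.restrict_le_self
    _ = ENNReal.ofReal (3 * π * r) := by
      rw [lintegral_indicator measurableSet_ball, Complex.setLIntegral_ball_inv_norm_sub ξ hr.le,
        Complex.volume_ball_eq_ofReal c hr.le, ← ENNReal.ofReal_mul (by positivity),
        ← ENNReal.ofReal_add (by positivity) (by positivity)]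
      congr 1
      field_simp
      ring

noncomputable def discAverageRatio (ζ : ℂ) (r : ℝ) (ξ : ℂ) : ℝ≥0∞ :=
  (∫⁻ w in ball ζ r, ENNReal.ofReal (‖w - ζ‖ / ‖w - ξ‖)) / ENNReal.ofReal (π * r ^ 2)

lemma measurable_discAverageRatio (ζ : ℂ) (r : ℝ) : Measurable (discAverageRatio ζ r) := by
  have hjoint : Measurable fun p : ℂ × ℂ => ENNReal.ofReal (‖p.1 - ζ‖ / ‖p.1 - p.2‖) := by
    fun_prop
  exact hjoint.lintegral_prod_left'.div_const _

section discAverageRatio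

variable {ζ : ℂ} {r : ℝ}

lemma discAverageRatio_le_three (hr : 0 < r) (ξ : ℂ) : discAverageRatio ζ r ξ ≤ 3 := by
  refine ENNReal.div_le_of_le_mul ?_
  calc ∫⁻ w in ball ζ r, ENNReal.ofReal (‖w - ζ‖ / ‖w - ξ‖)
      ≤ ∫⁻ w in ball ζ r, ENNReal.ofReal r * ENNReal.ofReal ‖w - ξ‖⁻¹ := by
        refine setLIntegral_mono' measurableSet_ball fun w hw => ?_
        rw [mem_ball, dist_eq_norm] at hw
        rw [← ENNReal.ofReal_mul hr.le, div_eq_mul_inv]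
        gcongr
    _ = ENNReal.ofReal r * ∫⁻ w in ball ζ r, ENNReal.ofReal ‖w - ξ‖⁻¹ :=
        lintegral_const_mul' _ _ ENNReal.ofReal_ne_top
    _ ≤ ENNReal.ofReal r * ENNReal.ofReal (3 * π * r) := by
        gcongr
        exact Complex.setLIntegral_ball_inv_norm_sub_le ζ ξ hr
    _ = 3 * ENNReal.ofReal (π * r ^ 2) := by
        rw [← ENNReal.ofReal_mul hr.le, ← ENNReal.ofReal_ofNat 3,
          ← ENNReal.ofReal_mul (by norm_num)]
        ring_nf

lemma discAverageRatio_self (hr : 0 < r) : discAverageRatio ζ r ζ = 1 := by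
  have hone : ∀ᵐ w ∂volume.restrict (ball ζ r), ENNReal.ofReal (‖w - ζ‖ / ‖w - ζ‖) = 1 := by
    refine ae_restrict_of_ae ?_
    filter_upwards [measure_singleton (μ := volume) ζ |> compl_mem_ae_iff.mpr] with w hw
    rw [div_self (norm_ne_zero_iff.mpr (sub_ne_zero.mpr hw)), ENNReal.ofReal_one]
  rw [discAverageRatio, lintegral_congr_ae hone, setLIntegral_one,
    Complex.volume_ball_eq_ofReal ζ hr.le]
  exact ENNReal.div_self (ENNReal.ofReal_pos.mpr (by positivity)).ne' ENNReal.ofReal_ne_top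

lemma discAverageRatio_le_of_lt_half {ξ : ℂ} (hr : 0 < r) (hrξ : r < ‖ξ - ζ‖ / 2) :
    discAverageRatio ζ r ξ ≤ ENNReal.ofReal (2 * r / ‖ξ - ζ‖) := by
  set d := ‖ξ - ζ‖
  have hd : 0 < d := by linarith
  refine ENNReal.div_le_of_le_mul ?_
  calc ∫⁻ w in ball ζ r, ENNReal.ofReal (‖w - ζ‖ / ‖w - ξ‖)
      ≤ ∫⁻ _ in ball ζ r, ENNReal.ofReal (2 * r / d) := by
        refine setLIntegral_mono' measurableSet_ball fun w hw => ?_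
        rw [mem_ball, dist_eq_norm] at hw
        have hfar : d / 2 ≤ ‖w - ξ‖ := by
          have := norm_sub_le_norm_sub_add_norm_sub ξ w ζ
          rw [norm_sub_rev ξ w] at this
          linarith
        calc ENNReal.ofReal (‖w - ζ‖ / ‖w - ξ‖) ≤ ENNReal.ofReal (r / (d / 2)) := by
              gcongr
          _ = ENNReal.ofReal (2 * r / d) := by congr 1; field_simp
    _ = ENNReal.ofReal (2 * r / d) * ENNReal.ofReal (π * r ^ 2) := by
        rw [setLIntegral_const, Complex.volume_ball_eq_ofReal ζ hr.le]

end discAverageRatio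

lemma tendsto_discAverageRatio (ζ ξ : ℂ) :
    Tendsto (fun r => discAverageRatio ζ r ξ) (𝓝[>] 0) (𝓝 (({ζ} : Set ℂ).indicator 1 ξ)) := by
  by_cases hξ : ξ = ζ
  · subst hξ
    rw [Set.indicator_of_mem (Set.mem_singleton ξ)]
    refine tendsto_const_nhds.congr' ?_
    filter_upwards [self_mem_nhdsWithin] with r hr
    exact (discAverageRatio_self hr).symm
  · rw [Set.indicator_of_notMem (Set.notMem_singleton_iff.mpr hξ)]
    have hd : 0 < ‖ξ - ζ‖ := norm_pos_iff.mpr (sub_ne_zero.mpr hξ)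
    have hbound : Tendsto (fun r : ℝ => ENNReal.ofReal (2 * r / ‖ξ - ζ‖)) (𝓝[>] 0) (𝓝 0) := by
      rw [← ENNReal.ofReal_zero]
      refine ENNReal.tendsto_ofReal (tendsto_nhdsWithin_of_tendsto_nhds ?_)
      simpa using ((continuous_const_mul 2).div_const ‖ξ - ζ‖).tendsto 0
    refine tendsto_of_tendsto_of_tendsto_of_le_of_le' tendsto_const_nhds hbound
      (Eventually.of_forall fun _ => zero_le) ?_
    filter_upwards [Ioo_mem_nhdsGT (half_pos hd)] with r hr
    exact discAverageRatio_le_of_lt_half hr.1 hr.2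

lemma setLIntegral_mul_newtonPotential_div_eq (μ : Measure ℂ) [SFinite μ] (ζ : ℂ) (r : ℝ) :
    (∫⁻ w in ball ζ r, ENNReal.ofReal ‖w - ζ‖ * ∫⁻ ξ, ENNReal.ofReal (1 / ‖ξ - w‖) ∂μ) /
        ENNReal.ofReal (π * r ^ 2) = ∫⁻ ξ, discAverageRatio ζ r ξ ∂μ := by
  have hpointwise : ∀ w, ENNReal.ofReal ‖w - ζ‖ * ∫⁻ ξ, ENNReal.ofReal (1 / ‖ξ - w‖) ∂μ
      = ∫⁻ ξ, ENNReal.ofReal (‖w - ζ‖ / ‖w - ξ‖) ∂μ := fun w => by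
    rw [← lintegral_const_mul' _ _ ENNReal.ofReal_ne_top]
    simp_rw [← ENNReal.ofReal_mul (norm_nonneg _), mul_one_div, norm_sub_rev _ w]
  have hjoint : Measurable fun p : ℂ × ℂ => ENNReal.ofReal (‖p.1 - ζ‖ / ‖p.1 - p.2‖) := by
    fun_prop
  simp_rw [hpointwise]
  rw [lintegral_lintegral_swap hjoint.aemeasurable, ENNReal.div_eq_inv_mul,
    ← lintegral_const_mul'' _ hjoint.lintegral_prod_left'.aemeasurable]
  simp only [discAverageRatio, ENNReal.div_eq_inv_mul]

theorem stmt_5_general (μ : Measure ℂ) [IsProbabilityMeasure μ]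
    (M : ℂ → ℝ≥0∞) (hM : ∀ ξ : ℂ, M ξ = ∫⁻ w, ENNReal.ofReal (1 / ‖w - ξ‖) ∂μ)
    (ζ : ℂ) :
    Tendsto
      (fun r : ℝ =>
        (∫⁻ w in ball ζ r, ENNReal.ofReal (‖w - ζ‖) * M w ∂volume) /
          ENNReal.ofReal (π * r ^ 2))
      (𝓝[>] 0) (𝓝 (μ {ζ})) := by
  obtain rfl : M = fun ξ => ∫⁻ w, ENNReal.ofReal (1 / ‖w - ξ‖) ∂μ := funext hM
  simp_rw [setLIntegral_mul_newtonPotential_div_eq μ ζ,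
    ← lintegral_indicator_one (measurableSet_singleton ζ)]
  refine tendsto_lintegral_filter_of_dominated_convergence (fun _ => 3)
    (.of_forall (measurable_discAverageRatio ζ)) ?_ (by simp)
    (ae_of_all _ (tendsto_discAverageRatio ζ))
  filter_upwards [self_mem_nhdsWithin] with r hr
  exact ae_of_all _ (discAverageRatio_le_three hr)

theorem stmt_5 (μ : Measure ℂ) [IsProbabilityMeasure μ]
    (K : Set ℂ) (hK : IsCompact K) (hsupp : μ Kᶜ = 0)
    (M : ℂ → ℝ≥0∞) (hM : ∀ ξ : ℂ, M ξ = ∫⁻ w, ENNReal.ofReal (1 / ‖w - ξ‖) ∂μ)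
    (ζ : ℂ) :
    Tendsto
      (fun r : ℝ =>
        (∫⁻ w in ball ζ r, ENNReal.ofReal (‖w - ζ‖) * M w ∂volume) /
          ENNReal.ofReal (π * r ^ 2))
      (𝓝[>] 0) (𝓝 (μ {ζ})) :=
  stmt_5_general μ M hM ζ
end

section
/- Let D ⊆ ℂ be a domain, ζ ∈ ∂D a boundary point which is not a peak point for A(closure(D)), so that lim_{r→0} L(D(ζ,r) ∩ D)/(πr²) = 1. Let μ be a Borel measure with compact support in D ∪ {ζ} and μ({ζ}) = 0, with Newton potential M and exceptional sets Π(ε) = {w : |w − ζ|·M(w) > ε}. Then for every ε > 0, lim_{r→0} L(D ∩ D(ζ,r) \ Π(ε))/(πr²) = 1. In particular, there exists a sequence η_ν ∈ D with η_ν → ζ and |ζ − η_ν|·M(η_ν) ≤ 2^{−ν}. -/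
/-!
The potential of the part of `μ` outside a small disc `closedBall ζ δ` is bounded near `ζ`, so
for small `r` every point of `Π(ε) ∩ D(ζ, r)` satisfies `r · N(w) ≥ ε / 2`, where `N` is the
potential of `μ` restricted to that disc. Since `∫_{D(c, r)} |w - z|⁻¹ dL(w) ≤ 5πr` uniformly
in `z` (cut the disc into dyadic annuli around `z`), Tonelli and Markov give
`L(Π(ε) ∩ D(ζ, r)) ≤ (10 / ε) μ(closedBall ζ δ) πr²`, and `μ(closedBall ζ δ) → 0` as `δ → 0`
because `μ {ζ} = 0`. Hence `Π(ε)` has density `0` at `ζ`, the good set `D ∩ D(ζ, r) \ Π(ε)` has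
density `1`, and in particular it is nonempty for small `r`, which yields the sequence.
-/

open MeasureTheory Filter Metric Set
open scoped ENNReal Real Topology

lemma Complex.volume_ball_of_nonneg (a : ℂ) {r : ℝ} (hr : 0 ≤ r) :
    volume (ball a r) = ENNReal.ofReal (π * r ^ 2) := by
  rw [Complex.volume_ball, ENNReal.ofReal_mul Real.pi_pos.le, ENNReal.ofReal_pow hr, mul_comm,
    ← ENNReal.ofReal_coe_nnreal, NNReal.coe_real_pi]

lemma Complex.volume_closedBall_of_nonneg (a : ℂ) {r : ℝ} (hr : 0 ≤ r) :
    volume (closedBall a r) = ENNReal.ofReal (π * r ^ 2) := by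
  rw [Measure.addHaar_closedBall_eq_addHaar_ball, Complex.volume_ball_of_nonneg a hr]

lemma setLIntegral_inv_norm_sub_le {E : Type*} [NormedAddCommGroup E] [MeasurableSpace E]
    (μ : Measure E) {s : Set E} (hs : MeasurableSet s) (ξ : E) {ρ : ℝ} (hρ : 0 < ρ)
    (h : ∀ w ∈ s, ρ ≤ ‖w - ξ‖) :
    ∫⁻ w in s, ENNReal.ofReal (1 / ‖w - ξ‖) ∂μ ≤ ENNReal.ofReal (1 / ρ) * μ s := by
  rw [← setLIntegral_const]
  exact setLIntegral_mono' hs fun w hw =>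
    ENNReal.ofReal_le_ofReal (one_div_le_one_div_of_le hρ (h w hw))

lemma lintegral_annulus_inv_norm_sub_le (ξ : ℂ) {s : ℝ} (hs : 0 < s) :
    ∫⁻ w in closedBall ξ (2 * s) \ closedBall ξ s, ENNReal.ofReal (1 / ‖w - ξ‖)
      ≤ ENNReal.ofReal (4 * π * s) := by
  have hfar : ∀ w ∈ closedBall ξ (2 * s) \ closedBall ξ s, s ≤ ‖w - ξ‖ := fun w hw => by
    have := hw.2
    rw [mem_closedBall, dist_eq_norm, not_le] at this
    exact this.le
  calc _ ≤ ENNReal.ofReal (1 / s) * volume (closedBall ξ (2 * s) \ closedBall ξ s) :=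
        setLIntegral_inv_norm_sub_le _ (measurableSet_closedBall.diff measurableSet_closedBall)
          ξ hs hfar
    _ ≤ ENNReal.ofReal (1 / s) * volume (closedBall ξ (2 * s)) := by
        gcongr; exact sdiff_subset
    _ = ENNReal.ofReal (4 * π * s) := by
        rw [Complex.volume_closedBall_of_nonneg ξ (by positivity),
          ← ENNReal.ofReal_mul (by positivity)]
        congr 1
        field_simp
        ring

lemma lintegral_closedBall_inv_norm_sub_le (ξ : ℂ) {r : ℝ} (hr : 0 < r) :
    ∫⁻ w in closedBall ξ r, ENNReal.ofReal (1 / ‖w - ξ‖) ≤ ENNReal.ofReal (4 * π * r) := by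
  set s : ℕ → ℝ := fun n => r / 2 / 2 ^ n
  have hs : ∀ n, 0 < s n := fun n => by positivity
  have hcover : closedBall ξ r ⊆ {ξ} ∪ ⋃ n, closedBall ξ (2 * s n) \ closedBall ξ (s n) := by
    intro w hw
    rcases eq_or_ne w ξ with rfl | hne
    · exact Or.inl rfl
    have hd : 0 < dist w ξ / r := div_pos (dist_pos.2 hne) hr
    obtain ⟨n, hlt, hle⟩ := exists_nat_pow_near_of_lt_one hd
      ((div_le_one hr).2 (mem_closedBall.1 hw)) (by norm_num : (0 : ℝ) < 1 / 2)
      (by norm_num : (1 / 2 : ℝ) < 1)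
    refine Or.inr (mem_iUnion.2 ⟨n, ?_, ?_⟩)
    · have h2s : 2 * s n = (1 / 2) ^ n * r := by simp only [s, one_div, inv_pow]; field_simp
      rw [mem_closedBall, h2s]
      exact (div_le_iff₀ hr).1 hle
    · have hsn : s n = (1 / 2) ^ (n + 1) * r := by simp only [s, one_div, inv_pow]; field_simp; ring
      rw [mem_closedBall, not_le, hsn]
      exact (lt_div_iff₀ hr).1 hlt
  calc _ ≤ ∫⁻ w in {ξ} ∪ ⋃ n, closedBall ξ (2 * s n) \ closedBall ξ (s n),
          ENNReal.ofReal (1 / ‖w - ξ‖) := lintegral_mono_set hcover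
    _ ≤ ∑' n, ∫⁻ w in closedBall ξ (2 * s n) \ closedBall ξ (s n),
          ENNReal.ofReal (1 / ‖w - ξ‖) := by
        refine (lintegral_union_le _ _ _).trans ?_
        rw [setLIntegral_measure_zero _ _ (measure_singleton ξ), zero_add]
        exact lintegral_iUnion_le _ _
    _ ≤ ∑' n, ENNReal.ofReal (4 * π * s n) :=
        ENNReal.tsum_le_tsum fun n => lintegral_annulus_inv_norm_sub_le ξ (hs n)
    _ = ENNReal.ofReal (4 * π * r) := by
        rw [← ENNReal.ofReal_tsum_of_nonneg (fun n => by positivity)]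
        · congr 1
          simp_rw [s, mul_div_assoc']
          exact tsum_geometric_two' _
        · simp_rw [s, mul_div_assoc']
          exact summable_geometric_two' _

lemma lintegral_ball_inv_norm_sub_le (ξ c : ℂ) {r : ℝ} (hr : 0 < r) :
    ∫⁻ w in ball c r, ENNReal.ofReal (1 / ‖w - ξ‖) ≤ ENNReal.ofReal (5 * π * r) := by
  have hfar : ∀ w ∈ ball c r \ ball ξ r, r ≤ ‖w - ξ‖ := fun w hw => by
    simpa [dist_eq_norm] using hw.2
  calc _ ≤ ∫⁻ w in (ball c r \ ball ξ r) ∪ closedBall ξ r, ENNReal.ofReal (1 / ‖w - ξ‖) :=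
        lintegral_mono_set fun w hw => by
          by_cases h : w ∈ ball ξ r
          exacts [Or.inr (ball_subset_closedBall h), Or.inl ⟨hw, h⟩]
    _ ≤ ENNReal.ofReal (1 / r) * volume (ball c r \ ball ξ r) + ENNReal.ofReal (4 * π * r) :=
        (lintegral_union_le _ _ _).trans (add_le_add
          (setLIntegral_inv_norm_sub_le _ (measurableSet_ball.diff measurableSet_ball) ξ hr hfar)
          (lintegral_closedBall_inv_norm_sub_le ξ hr))
    _ ≤ ENNReal.ofReal (1 / r) * volume (ball c r) + ENNReal.ofReal (4 * π * r) := by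
        gcongr; exact sdiff_subset
    _ = ENNReal.ofReal (5 * π * r) := by
        rw [Complex.volume_ball_of_nonneg c hr.le, ← ENNReal.ofReal_mul (by positivity),
          ← ENNReal.ofReal_add (by positivity) (by positivity)]
        congr 1
        field_simp
        ring

-- At `w = z` the kernel is `0` rather than `∞` (`1 / 0 = 0`); only upper bounds on it are used.
noncomputable def newtonPotential (μ : Measure ℂ) (z : ℂ) : ℝ≥0∞ :=
  ∫⁻ w, ENNReal.ofReal (1 / ‖w - z‖) ∂μ

lemma measurable_inv_norm_sub :
    Measurable fun p : ℂ × ℂ => ENNReal.ofReal (1 / ‖p.1 - p.2‖) :=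
  ENNReal.measurable_ofReal.comp
    (measurable_const.div (continuous_fst.sub continuous_snd).norm.measurable)

lemma measurable_newtonPotential (μ : Measure ℂ) [SFinite μ] :
    Measurable (newtonPotential μ) :=
  measurable_inv_norm_sub.lintegral_prod_left

lemma newtonPotential_restrict_add_restrict_compl (μ : Measure ℂ) {s : Set ℂ}
    (hs : MeasurableSet s) (z : ℂ) :
    newtonPotential μ z = newtonPotential (μ.restrict s) z + newtonPotential (μ.restrict sᶜ) z := by
  rw [newtonPotential, newtonPotential, newtonPotential, ← lintegral_add_measure,
    Measure.restrict_add_restrict_compl hs]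

lemma newtonPotential_restrict_compl_closedBall_le (μ : Measure ℂ) {ζ z : ℂ} {δ : ℝ}
    (hδ : 0 < δ) (hz : z ∈ ball ζ (δ / 2)) :
    newtonPotential (μ.restrict (closedBall ζ δ)ᶜ) z ≤ ENNReal.ofReal (2 / δ) * μ univ := by
  have hfar : ∀ w ∈ (closedBall ζ δ)ᶜ, δ / 2 ≤ ‖w - z‖ := fun w hw => by
    have h1 : δ < dist w ζ := not_le.1 hw
    have h2 : dist z ζ < δ / 2 := hz
    have := dist_triangle w z ζ
    rw [← dist_eq_norm]
    linarith
  calc _ ≤ ENNReal.ofReal (1 / (δ / 2)) * μ (closedBall ζ δ)ᶜ :=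
        setLIntegral_inv_norm_sub_le μ measurableSet_closedBall.compl z (by positivity) hfar
    _ ≤ ENNReal.ofReal (2 / δ) * μ univ := by
        rw [one_div_div]; gcongr; exact subset_univ _

lemma lintegral_ball_newtonPotential_le (μ : Measure ℂ) [SFinite μ] (c : ℂ) {r : ℝ}
    (hr : 0 < r) :
    ∫⁻ z in ball c r, newtonPotential μ z ≤ ENNReal.ofReal (5 * π * r) * μ univ := by
  calc ∫⁻ z in ball c r, newtonPotential μ z
      = ∫⁻ w, (∫⁻ z in ball c r, ENNReal.ofReal (1 / ‖w - z‖)) ∂μ :=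
        lintegral_lintegral_swap (f := fun z w => ENNReal.ofReal (1 / ‖w - z‖))
          (measurable_inv_norm_sub.comp measurable_swap).aemeasurable
    _ ≤ ∫⁻ _, ENNReal.ofReal (5 * π * r) ∂μ := by
        refine lintegral_mono fun w => ?_
        simp_rw [norm_sub_rev w]
        exact lintegral_ball_inv_norm_sub_le w c hr
    _ = ENNReal.ofReal (5 * π * r) * μ univ := lintegral_const _

def potentialExceptionalSet (μ : Measure ℂ) (ζ : ℂ) (ε : ℝ) : Set ℂ :=
  {w | ENNReal.ofReal ε < ENNReal.ofReal ‖w - ζ‖ * newtonPotential μ w}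

lemma potentialExceptionalSet_inter_ball_subset (μ : Measure ℂ) (ζ : ℂ) {ε δ r : ℝ}
    (hε : 0 < ε) (hδ : 0 < δ) (hrδ : r ≤ δ / 2)
    (hfar : ENNReal.ofReal r * (ENNReal.ofReal (2 / δ) * μ univ) ≤ ENNReal.ofReal (ε / 2)) :
    potentialExceptionalSet μ ζ ε ∩ ball ζ r ⊆
      {z | ENNReal.ofReal (ε / 2) ≤ ENNReal.ofReal r *
        newtonPotential (μ.restrict (closedBall ζ δ)) z} := by
  rintro w ⟨hwP, hwr⟩
  have hwζ : ENNReal.ofReal ‖w - ζ‖ ≤ ENNReal.ofReal r :=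
    ENNReal.ofReal_le_ofReal (dist_eq_norm w ζ ▸ (mem_ball.1 hwr).le)
  have hwδ : w ∈ ball ζ (δ / 2) := ball_subset_ball hrδ hwr
  refine (lt_of_add_lt_add_right (a := ENNReal.ofReal (ε / 2)) ?_).le
  calc ENNReal.ofReal (ε / 2) + ENNReal.ofReal (ε / 2) = ENNReal.ofReal ε := by
        rw [← ENNReal.ofReal_add (by positivity) (by positivity), add_halves]
    _ < ENNReal.ofReal ‖w - ζ‖ * newtonPotential μ w := hwP
    _ ≤ ENNReal.ofReal r * (newtonPotential (μ.restrict (closedBall ζ δ)) w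
          + ENNReal.ofReal (2 / δ) * μ univ) := by
        rw [newtonPotential_restrict_add_restrict_compl μ measurableSet_closedBall]
        gcongr
        exact newtonPotential_restrict_compl_closedBall_le μ hδ hwδ
    _ ≤ _ := by rw [mul_add]; gcongr

lemma volume_potentialExceptionalSet_inter_ball_le (μ : Measure ℂ) [SFinite μ] (ζ : ℂ)
    {ε δ r : ℝ} (hε : 0 < ε) (hδ : 0 < δ) (hr : 0 < r) (hrδ : r ≤ δ / 2)
    (hfar : ENNReal.ofReal r * (ENNReal.ofReal (2 / δ) * μ univ) ≤ ENNReal.ofReal (ε / 2)) :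
    volume (potentialExceptionalSet μ ζ ε ∩ ball ζ r)
      ≤ ENNReal.ofReal (10 / ε) * μ (closedBall ζ δ) * ENNReal.ofReal (π * r ^ 2) := by
  set N := newtonPotential (μ.restrict (closedBall ζ δ))
  have hmarkov : ENNReal.ofReal (ε / 2) * volume (potentialExceptionalSet μ ζ ε ∩ ball ζ r)
      ≤ ENNReal.ofReal r * (ENNReal.ofReal (5 * π * r) * μ (closedBall ζ δ)) :=
    calc _ ≤ ENNReal.ofReal (ε / 2) *
          volume.restrict (ball ζ r) {z | ENNReal.ofReal (ε / 2) ≤ ENNReal.ofReal r * N z} := by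
          rw [Measure.restrict_apply' measurableSet_ball]
          exact mul_le_mul_right (measure_mono (subset_inter
            (potentialExceptionalSet_inter_ball_subset μ ζ hε hδ hrδ hfar) inter_subset_right)) _
      _ ≤ ∫⁻ z in ball ζ r, ENNReal.ofReal r * N z :=
          mul_meas_ge_le_lintegral₀
            ((measurable_newtonPotential _).const_mul _).aemeasurable _
      _ = ENNReal.ofReal r * ∫⁻ z in ball ζ r, N z :=
          lintegral_const_mul _ (measurable_newtonPotential _)
      _ ≤ _ := by
          grw [lintegral_ball_newtonPotential_le _ ζ hr, Measure.restrict_apply_univ]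
  calc volume (potentialExceptionalSet μ ζ ε ∩ ball ζ r)
      = ENNReal.ofReal (2 / ε) *
          (ENNReal.ofReal (ε / 2) * volume (potentialExceptionalSet μ ζ ε ∩ ball ζ r)) := by
        rw [← mul_assoc, ← ENNReal.ofReal_mul (by positivity),
          show 2 / ε * (ε / 2) = 1 by field_simp, ENNReal.ofReal_one, one_mul]
    _ ≤ ENNReal.ofReal (2 / ε) *
          (ENNReal.ofReal r * (ENNReal.ofReal (5 * π * r) * μ (closedBall ζ δ))) := by
        gcongr
    _ = ENNReal.ofReal (2 / ε * r * (5 * π * r)) * μ (closedBall ζ δ) := by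
        simp only [← mul_assoc]
        rw [← ENNReal.ofReal_mul (by positivity), ← ENNReal.ofReal_mul (by positivity)]
        ring_nf
    _ = _ := by
        rw [mul_right_comm _ (μ _), ← ENNReal.ofReal_mul (by positivity)]
        congr 2
        field_simp
        ring

lemma tendsto_measure_closedBall_of_measure_singleton_eq_zero {α : Type*}
    [MetricSpace α] [MeasurableSpace α] [OpensMeasurableSpace α] (μ : Measure α)
    [IsFiniteMeasure μ] {ζ : α} (hζ : μ {ζ} = 0) :
    Tendsto (fun δ => μ (closedBall ζ δ)) (𝓝[>] 0) (𝓝 0) := by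
  have h := tendsto_measure_cthickening_of_isClosed (μ := μ)
    ⟨1, one_pos, measure_ne_top μ _⟩ (isClosed_singleton (x := ζ))
  rw [hζ] at h
  refine (h.mono_left nhdsWithin_le_nhds).congr' ?_
  filter_upwards [self_mem_nhdsWithin] with δ hδ
  rw [cthickening_singleton ζ (le_of_lt hδ)]

lemma tendsto_volume_potentialExceptionalSet_inter_ball_div (μ : Measure ℂ)
    [IsFiniteMeasure μ] {ζ : ℂ} (hζ : μ {ζ} = 0) {ε : ℝ} (hε : 0 < ε) :
    Tendsto (fun r => volume (potentialExceptionalSet μ ζ ε ∩ ball ζ r) /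
      ENNReal.ofReal (π * r ^ 2)) (𝓝[>] 0) (𝓝 0) := by
  rw [ENNReal.tendsto_nhds_zero]
  intro ε' hε'
  have hnear : Tendsto (fun δ => ENNReal.ofReal (10 / ε) * μ (closedBall ζ δ))
      (𝓝[>] 0) (𝓝 0) := by
    simpa using ENNReal.Tendsto.const_mul
      (tendsto_measure_closedBall_of_measure_singleton_eq_zero μ hζ) (Or.inr ENNReal.ofReal_ne_top)
  obtain ⟨δ, hδε', hδ⟩ := ((hnear.eventually (Iio_mem_nhds hε')).and self_mem_nhdsWithin).exists
  have hfar : ∀ᶠ r in 𝓝[>] (0 : ℝ),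
      ENNReal.ofReal r * (ENNReal.ofReal (2 / δ) * μ univ) < ENNReal.ofReal (ε / 2) := by
    have : Tendsto (fun r => ENNReal.ofReal r * (ENNReal.ofReal (2 / δ) * μ univ))
        (𝓝[>] 0) (𝓝 0) := by
      simpa using ENNReal.Tendsto.mul_const
        ((ENNReal.continuous_ofReal.tendsto 0).mono_left nhdsWithin_le_nhds)
        (Or.inr (ENNReal.mul_ne_top ENNReal.ofReal_ne_top (measure_ne_top μ univ)))
    exact this.eventually (gt_mem_nhds (by simpa using hε))
  have hsmall : ∀ᶠ r in 𝓝[>] (0 : ℝ), r < δ / 2 :=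
    (eventually_lt_nhds (half_pos hδ)).filter_mono nhdsWithin_le_nhds
  filter_upwards [hfar, hsmall, self_mem_nhdsWithin] with r hrfar hrδ hr
  exact (ENNReal.div_le_of_le_mul (volume_potentialExceptionalSet_inter_ball_le μ ζ hε hδ hr
    hrδ.le hrfar.le)).trans hδε'.le

lemma tendsto_measure_diff_div {α ι : Type*} [MeasurableSpace α] {μ : Measure α}
    {l : Filter ι} {s t : ι → Set α} {v : ι → ℝ≥0∞}
    (hs : Tendsto (fun i => μ (s i) / v i) l (𝓝 1))
    (ht : Tendsto (fun i => μ (t i) / v i) l (𝓝 0)) :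
    Tendsto (fun i => μ (s i \ t i) / v i) l (𝓝 1) := by
  have hlower : Tendsto (fun i => μ (s i) / v i - μ (t i) / v i) l (𝓝 1) := by
    simpa using ENNReal.Tendsto.sub hs ht (Or.inl ENNReal.one_ne_top)
  refine tendsto_of_tendsto_of_tendsto_of_le_of_le hlower hs (fun i => ?_)
    (fun i => ENNReal.div_le_div_right (measure_mono sdiff_subset) _)
  rw [tsub_le_iff_right, ENNReal.div_add_div_same]
  exact ENNReal.div_le_div_right (tsub_le_iff_right.1 le_measure_sdiff) _

lemma Filter.Tendsto.eventually_nonempty_of_measure_div {α ι : Type*} [MeasurableSpace α]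
    {μ : Measure α} {l : Filter ι} {s : ι → Set α} {v : ι → ℝ≥0∞}
    (h : Tendsto (fun i => μ (s i) / v i) l (𝓝 1)) : ∀ᶠ i in l, (s i).Nonempty := by
  filter_upwards [h.eventually (eventually_ne_nhds one_ne_zero)] with i hi
  exact nonempty_of_measure_ne_zero fun h0 => hi (by rw [h0, ENNReal.zero_div])

theorem stmt_15_general (D : Set ℂ)
    (ζ : ℂ)
    (hdens : Tendsto (fun r : ℝ => volume (D ∩ ball ζ r) / ENNReal.ofReal (π * r ^ 2))
      (𝓝[>] 0) (𝓝 1))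
    (μ : Measure ℂ) [IsFiniteMeasure μ]
    (hζμ : μ {ζ} = 0)
    (M : ℂ → ℝ≥0∞)
    (hM : ∀ ξ : ℂ, M ξ = ∫⁻ w, ENNReal.ofReal (1 / ‖w - ξ‖) ∂μ)
    (Pset : ℝ → Set ℂ)
    (hPset : ∀ ε : ℝ, Pset ε = {w : ℂ | ENNReal.ofReal ε < ENNReal.ofReal (‖w - ζ‖) * M w}) :
    (∀ ε : ℝ, 0 < ε →
      Tendsto (fun r : ℝ => volume ((D ∩ ball ζ r) \ Pset ε) / ENNReal.ofReal (π * r ^ 2))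
        (𝓝[>] 0) (𝓝 1)) ∧
    ∃ η : ℕ → ℂ, (∀ ν, η ν ∈ D) ∧ Tendsto η atTop (𝓝 ζ) ∧
      ∀ ν, ENNReal.ofReal (‖ζ - η ν‖) * M (η ν) ≤ ENNReal.ofReal ((1 / 2 : ℝ) ^ ν) := by
  obtain rfl : M = newtonPotential μ := funext hM
  obtain rfl : Pset = potentialExceptionalSet μ ζ := funext hPset
  have hgood : ∀ ε : ℝ, 0 < ε → Tendsto (fun r : ℝ => volume ((D ∩ ball ζ r) \
      potentialExceptionalSet μ ζ ε) / ENNReal.ofReal (π * r ^ 2)) (𝓝[>] 0) (𝓝 1) :=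
    fun ε hε => (tendsto_measure_diff_div hdens
      (tendsto_volume_potentialExceptionalSet_inter_ball_div μ hζμ hε)).congr fun r => by
        rw [sdiff_inter, sdiff_eq_empty.2 inter_subset_right, union_empty]
  refine ⟨hgood, ?_⟩
  have hpoint : ∀ ν : ℕ, ∃ w ∈ D, dist w ζ < (1 / 2 : ℝ) ^ ν ∧
      w ∉ potentialExceptionalSet μ ζ ((1 / 2 : ℝ) ^ ν) := fun ν => by
    have hpos : (0 : ℝ) < (1 / 2) ^ ν := by positivity
    obtain ⟨r, ⟨w, ⟨hwD, hwr⟩, hwP⟩, hr⟩ := ((hgood _ hpos).eventually_nonempty_of_measure_div.and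
      ((eventually_lt_nhds hpos).filter_mono nhdsWithin_le_nhds)).exists
    exact ⟨w, hwD, (mem_ball.1 hwr).trans hr, hwP⟩
  choose η hηD hηζ hηP using hpoint
  refine ⟨η, hηD, tendsto_iff_dist_tendsto_zero.2 (squeeze_zero (fun _ => dist_nonneg)
    (fun ν => (hηζ ν).le) (tendsto_pow_atTop_nhds_zero_of_lt_one (by norm_num) (by norm_num))),
    fun ν => ?_⟩
  rw [norm_sub_rev]
  exact not_lt.1 (hηP ν)

theorem stmt_15 (D : Set ℂ) (hDo : IsOpen D) (hDc : IsConnected D)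
    (ζ : ℂ) (hζ : ζ ∈ frontier D)
    (hdens : Tendsto (fun r : ℝ => volume (D ∩ ball ζ r) / ENNReal.ofReal (π * r ^ 2))
      (𝓝[>] 0) (𝓝 1))
    (μ : Measure ℂ) [IsFiniteMeasure μ]
    (hsupp : ∃ K : Set ℂ, IsCompact K ∧ K ⊆ D ∪ {ζ} ∧ μ Kᶜ = 0)
    (hζμ : μ {ζ} = 0)
    (M : ℂ → ℝ≥0∞)
    (hM : ∀ ξ : ℂ, M ξ = ∫⁻ w, ENNReal.ofReal (1 / ‖w - ξ‖) ∂μ)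
    (Pset : ℝ → Set ℂ)
    (hPset : ∀ ε : ℝ, Pset ε = {w : ℂ | ENNReal.ofReal ε < ENNReal.ofReal (‖w - ζ‖) * M w}) :
    (∀ ε : ℝ, 0 < ε →
      Tendsto (fun r : ℝ => volume ((D ∩ ball ζ r) \ Pset ε) / ENNReal.ofReal (π * r ^ 2))
        (𝓝[>] 0) (𝓝 1)) ∧
    ∃ η : ℕ → ℂ, (∀ ν, η ν ∈ D) ∧ Tendsto η atTop (𝓝 ζ) ∧
      ∀ ν, ENNReal.ofReal (‖ζ - η ν‖) * M (η ν) ≤ ENNReal.ofReal ((1 / 2 : ℝ) ^ ν) :=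
  stmt_15_general D ζ hdens μ hζμ M hM Pset hPset
end

section
/- Every locally compact, σ-compact Hausdorff topological space X has the following property: for any positive linear functional Λ : C(X) → ℝ on the space of continuous real-valued functions, there exists a compact set K ⊆ X such that Λ(φ) = 0 for every φ ∈ C(X) vanishing identically on K. -/
/-! Exhaust `X` by compact sets `K n`. If no `K n` carries `Λ`, pick for each `n` a nonnegative
`gₙ` vanishing on `K n` with `Λ gₙ = 1`. Every point has a neighbourhood inside some `K m`, on
which all `gₙ` with `n ≥ m` vanish, so `Φ = ∑ gₙ` is a locally finite sum, hence continuous. By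
positivity `Λ Φ ≥ Λ (g₀ + ⋯ + g_{N-1}) = N` for every `N`, which is absurd. -/

open Function Finset

namespace CompactExhaustion

variable {X : Type*} [TopologicalSpace X]

theorem locallyFinite_of_disjoint (K : CompactExhaustion X) {s : ℕ → Set X}
    (h : ∀ n, Disjoint (s n) (K n)) : LocallyFinite s := by
  intro x
  set m := K.find x + 1
  refine ⟨K m, mem_interior_iff_mem_nhds.mp (K.subset_interior_succ _ (K.mem_find x)),
    (Set.finite_Iio m).subset fun n ⟨y, hys, hyK⟩ => ?_⟩
  by_contra! hmn
  exact (h n).notMem_of_mem_left hys (K.subset (not_lt.mp hmn) hyK)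

theorem exists_forall_sum_range_le (K : CompactExhaustion X) {g : ℕ → C(X, ℝ)}
    (hg0 : ∀ n, 0 ≤ g n) (hgK : ∀ n, ∀ x ∈ K n, g n x = 0) :
    ∃ Φ : C(X, ℝ), ∀ N, ∑ n ∈ range N, g n ≤ Φ := by
  have hfin : LocallyFinite fun n => support (g n) :=
    K.locallyFinite_of_disjoint fun n =>
      Set.disjoint_left.mpr fun x hx hxK => hx (hgK n x hxK)
  refine ⟨⟨fun x => ∑ᶠ n, g n x, continuous_finsum (fun n => (g n).continuous) hfin⟩,
    fun N x => ?_⟩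
  have hx : (support fun n => g n x).Finite := hfin.point_finite x
  calc (∑ n ∈ range N, g n) x
      = ∑ n ∈ range N, g n x := ContinuousMap.sum_apply _ _ _
    _ ≤ ∑ n ∈ range N ∪ hx.toFinset, g n x :=
        sum_le_sum_of_subset_of_nonneg subset_union_left fun n _ _ => hg0 n x
    _ = ∑ᶠ n, g n x := (finsum_eq_sum_of_support_subset _ (by simp)).symm

end CompactExhaustion

namespace PositiveLinearMap

theorem abs_apply_le_apply_abs {E F : Type*} [AddCommGroup E] [Lattice E]
    [IsOrderedAddMonoid E] [AddCommGroup F] [LinearOrder F] [IsOrderedAddMonoid F]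
    [Module ℝ E] [Module ℝ F] (Λ : E →ₚ[ℝ] F) (a : E) : |Λ a| ≤ Λ |a| :=
  abs_le'.mpr ⟨OrderHomClass.mono Λ (le_abs_self a),
    by simpa using OrderHomClass.mono Λ (neg_le_abs a)⟩

theorem exists_nonneg_apply_eq_one_of_apply_ne_zero {X : Type*} [TopologicalSpace X]
    (Λ : C(X, ℝ) →ₚ[ℝ] ℝ) {φ : C(X, ℝ)} (hφ : Λ φ ≠ 0) :
    ∃ g : C(X, ℝ), 0 ≤ g ∧ (∀ x, φ x = 0 → g x = 0) ∧ Λ g = 1 := by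
  have hpos : 0 < Λ |φ| := (abs_pos.mpr hφ).trans_le (Λ.abs_apply_le_apply_abs φ)
  refine ⟨(Λ |φ|)⁻¹ • |φ|, smul_nonneg (inv_nonneg.mpr hpos.le) (abs_nonneg φ),
    fun x hx => by simp [hx], ?_⟩
  rw [map_smul, smul_eq_mul, inv_mul_cancel₀ hpos.ne']

end PositiveLinearMap

theorem stmt_18_general {X : Type*} [TopologicalSpace X] [LocallyCompactSpace X]
    [SigmaCompactSpace X]
    (Λ : C(X, ℝ) →ₗ[ℝ] ℝ) (hpos : ∀ φ : C(X, ℝ), (∀ t, 0 ≤ φ t) → 0 ≤ Λ φ) :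
    ∃ K : Set X, IsCompact K ∧ ∀ φ : C(X, ℝ), (∀ x ∈ K, φ x = 0) → Λ φ = 0 := by
  by_contra! h
  let Λ' := PositiveLinearMap.mk₀ Λ fun φ hφ => hpos φ hφ
  let K := CompactExhaustion.choice X
  choose φ hφK hφ using fun n => h (K n) (K.isCompact n)
  choose g hg0 hgφ hg1 using fun n => Λ'.exists_nonneg_apply_eq_one_of_apply_ne_zero (hφ n)
  obtain ⟨Φ, hΦ⟩ := K.exists_forall_sum_range_le hg0 fun n x hx => hgφ n x (hφK n x hx)
  obtain ⟨N, hN⟩ := exists_nat_gt (Λ Φ)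
  have hNΦ : (N : ℝ) ≤ Λ' Φ := by
    simpa [map_sum, hg1] using OrderHomClass.mono Λ' (hΦ N)
  exact hNΦ.not_gt hN

theorem stmt_18 {X : Type*} [TopologicalSpace X] [T2Space X] [LocallyCompactSpace X]
    [SigmaCompactSpace X]
    (Λ : C(X, ℝ) →ₗ[ℝ] ℝ) (hpos : ∀ φ : C(X, ℝ), (∀ t, 0 ≤ φ t) → 0 ≤ Λ φ) :
    ∃ K : Set X, IsCompact K ∧ ∀ φ : C(X, ℝ), (∀ x ∈ K, φ x = 0) → Λ φ = 0 :=
  stmt_18_general Λ hpos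
end
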